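/- Let f_i(n) be the number of tilings of the 2×n rectangle by dominoes and 2×2 squares with exactly i squares. Then for all n ≥ 0, ∑_i (−1)^i · f_i(n) = 1. -/

import Mathlib

/-- A tile in a tiling of the `2 × n` rectangle: `H r c` is a horizontal domino
occupying cells `(r,c)` and `(r,c+1)`; `V c` is a vertical domino occupying
`(0,c)` and `(1,c)`; `S c` is a `2 × 2` square occupying the four cells in
columns `c` and `c+1`. -/
inductive Tile : Type
  | H : ℕ → ℕ → Tile
  | V : ℕ → Tile
  | S : ℕ → Tile
deriving DecidableEq

/-- The set of cells (row, column) covered by a tile. -/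
def Tile.cells : Tile → Finset (ℕ × ℕ)
  | .H r c => {(r, c), (r, c + 1)}
  | .V c => {(0, c), (1, c)}
  | .S c => {(0, c), (0, c + 1), (1, c), (1, c + 1)}

/-- Whether a tile is a `2 × 2` square. -/
def Tile.isSquare : Tile → Bool
  | .S _ => true
  | _ => false

/-- `T` is a tiling of the `2 × n` rectangle: the tiles cover pairwise disjoint
sets of cells, and together they cover the rectangle exactly. -/
def IsTiling (n : ℕ) (T : Finset Tile) : Prop :=
  (∀ t ∈ T, ∀ t' ∈ T, t ≠ t' → Disjoint t.cells t'.cells) ∧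
    T.biUnion Tile.cells = Finset.range 2 ×ˢ Finset.range n

/-- `f i n` is the number of tilings of the `2 × n` rectangle by dominoes and
`2 × 2` squares using exactly `i` squares. -/
noncomputable def f (i n : ℕ) : ℕ :=
  Nat.card {T : Finset Tile // IsTiling n T ∧ (T.filter fun t => t.isSquare).card = i}

open Finset

def allTiles (n : ℕ) : Finset Tile :=
  ((range 2 ×ˢ range n).image fun p => Tile.H p.1 p.2) ∪
    ((range n).image Tile.V) ∪ ((range n).image Tile.S)

open scoped Classical

noncomputable def tilings (n : ℕ) : Finset (Finset Tile) :=
  (allTiles n).powerset.filter fun T => IsTiling n T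

def sqc (T : Finset Tile) : ℕ := (T.filter fun t => t.isSquare).card

lemma cells_subset {n : ℕ} {T : Finset Tile} (hT : IsTiling n T) {t : Tile} (ht : t ∈ T) :
    t.cells ⊆ range 2 ×ˢ range n := by
  rw [← hT.2]; exact subset_biUnion_of_mem Tile.cells ht

lemma mem_tilings {n : ℕ} {T : Finset Tile} : T ∈ tilings n ↔ IsTiling n T := by
  constructor
  · intro h; exact (mem_filter.1 h).2
  · intro h
    refine mem_filter.2 ⟨mem_powerset.2 fun t ht => ?_, h⟩
    have hc := cells_subset h ht
    cases t with
    | H r c =>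
      have h1 : ((r, c) : ℕ × ℕ) ∈ range 2 ×ˢ range n := hc (by simp [Tile.cells])
      simp only [mem_product, mem_range] at h1
      simp only [allTiles, mem_union, mem_image, mem_product, mem_range]
      exact Or.inl (Or.inl ⟨(r, c), by simp [h1.1, h1.2]⟩)
    | V c =>
      have h1 : ((0, c) : ℕ × ℕ) ∈ range 2 ×ˢ range n := hc (by simp [Tile.cells])
      simp only [mem_product, mem_range] at h1
      simp only [allTiles, mem_union, mem_image, mem_range]
      exact Or.inl (Or.inr ⟨c, h1.2, rfl⟩)
    | S c =>
      have h1 : ((0, c) : ℕ × ℕ) ∈ range 2 ×ˢ range n := hc (by simp [Tile.cells])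
      simp only [mem_product, mem_range] at h1
      simp only [allTiles, mem_union, mem_image, mem_range]
      exact Or.inr ⟨c, h1.2, rfl⟩

lemma sqc_le {n : ℕ} {T : Finset Tile} (hT : IsTiling n T) : sqc T ≤ n := by
  have : sqc T ≤ (range n).card := by
    apply Finset.card_le_card_of_injOn (fun t => match t with
      | Tile.S c => c | Tile.H _ c => c | Tile.V c => c)
    · intro t ht
      rw [mem_coe, mem_filter] at ht
      obtain ⟨ht, hsq⟩ := ht
      cases t with
      | S c =>
        have h1 : ((0, c) : ℕ × ℕ) ∈ range 2 ×ˢ range n :=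
          cells_subset hT ht (by simp [Tile.cells])
        simp only [mem_product, mem_range] at h1
        simpa using h1.2
      | H r c => simp [Tile.isSquare] at hsq
      | V c => simp [Tile.isSquare] at hsq
    · intro a ha b hb hab
      rw [mem_coe, mem_filter] at ha hb
      cases a with
      | S c =>
        cases b with
        | S c' => simp_all
        | H r c' => simp [Tile.isSquare] at hb
        | V c' => simp [Tile.isSquare] at hb
      | H r c => simp [Tile.isSquare] at ha
      | V c => simp [Tile.isSquare] at ha
  simpa using this

lemma f_eq (i n : ℕ) : f i n = ((tilings n).filter fun T => sqc T = i).card := by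
  have hset : {T : Finset Tile | IsTiling n T ∧ (T.filter fun t => t.isSquare).card = i}
      = ↑((tilings n).filter fun T => sqc T = i) := by
    ext T
    exact ⟨fun h => mem_filter.2 ⟨mem_tilings.2 h.1, h.2⟩,
      fun h => ⟨mem_tilings.1 (mem_filter.1 h).1, (mem_filter.1 h).2⟩⟩
  have h1 : f i n = Nat.card ↥{T : Finset Tile | IsTiling n T ∧ (T.filter fun t => t.isSquare).card = i} := rfl
  rw [h1, Nat.card_coe_set_eq, hset, Set.ncard_coe_finset]

def allV (n : ℕ) : Finset Tile := (range n).image Tile.V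

lemma allV_tiling (n : ℕ) : IsTiling n (allV n) := by
  constructor
  · intro t ht t' ht' hne
    simp only [allV, mem_image, mem_range] at ht ht'
    obtain ⟨a, ha, rfl⟩ := ht
    obtain ⟨b, hb, rfl⟩ := ht'
    have hab : a ≠ b := fun h => hne (by rw [h])
    simp only [Tile.cells, Finset.disjoint_left]
    intro p hp hp'
    simp only [mem_insert, mem_singleton, Prod.ext_iff] at hp hp'
    omega
  · ext ⟨r, c⟩
    simp only [allV, mem_biUnion, mem_image, mem_range, mem_product]
    constructor
    · rintro ⟨t, ⟨a, ha, rfl⟩, hp⟩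
      simp only [Tile.cells, mem_insert, mem_singleton, Prod.ext_iff] at hp
      omega
    · intro h
      refine ⟨Tile.V c, ⟨c, h.2, rfl⟩, ?_⟩
      have h1 : r < 2 := h.1
      rcases (by omega : r = 0 ∨ r = 1) with rfl | rfl <;> simp [Tile.cells]

lemma sqc_allV (n : ℕ) : sqc (allV n) = 0 := by
  simp only [sqc, card_eq_zero, filter_eq_empty_iff]
  intro t ht
  simp only [allV, mem_image] at ht
  obtain ⟨a, _, rfl⟩ := ht
  simp [Tile.isSquare]

lemma replace_tiling {n : ℕ} {T : Finset Tile} (hT : IsTiling n T) (A B : Finset Tile)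
    (hA : A ⊆ T)
    (hB : ∀ b ∈ B, ∀ b' ∈ B, b ≠ b' → Disjoint b.cells b'.cells)
    (hcells : B.biUnion Tile.cells = A.biUnion Tile.cells) :
    IsTiling n ((T \ A) ∪ B) := by
  have hdisj : ∀ t ∈ T \ A, ∀ b ∈ B, Disjoint t.cells b.cells := by
    intro t ht b hb
    rw [mem_sdiff] at ht
    have h1 : Disjoint t.cells (A.biUnion Tile.cells) := by
      rw [Finset.disjoint_biUnion_right]
      intro a ha
      exact hT.1 t ht.1 a (hA ha) (fun h => ht.2 (h ▸ ha))
    have h2 : b.cells ⊆ A.biUnion Tile.cells := by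
      rw [← hcells]; exact subset_biUnion_of_mem Tile.cells hb
    exact h1.mono_right h2
  constructor
  · intro t ht t' ht' hne
    rw [mem_union] at ht ht'
    rcases ht with ht | ht <;> rcases ht' with ht' | ht'
    · exact hT.1 t (mem_sdiff.1 ht).1 t' (mem_sdiff.1 ht').1 hne
    · exact hdisj t ht t' ht'
    · exact (hdisj t' ht' t ht).symm
    · exact hB t ht t' ht' hne
  · have key : ((T \ A) ∪ B).biUnion Tile.cells
        = (T \ A).biUnion Tile.cells ∪ B.biUnion Tile.cells := by
      ext p
      simp only [mem_biUnion, mem_union]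
      constructor
      · rintro ⟨t, h1 | h1, h2⟩
        exacts [Or.inl ⟨t, h1, h2⟩, Or.inr ⟨t, h1, h2⟩]
      · rintro (⟨t, h1, h2⟩ | ⟨t, h1, h2⟩)
        exacts [⟨t, Or.inl h1, h2⟩, ⟨t, Or.inr h1, h2⟩]
    have key2 : (T \ A).biUnion Tile.cells ∪ A.biUnion Tile.cells = T.biUnion Tile.cells := by
      ext p
      simp only [mem_biUnion, mem_union, mem_sdiff]
      constructor
      · rintro (⟨t, ⟨h1, _⟩, h2⟩ | ⟨t, h1, h2⟩)
        exacts [⟨t, h1, h2⟩, ⟨t, hA h1, h2⟩]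
      · rintro ⟨t, h1, h2⟩
        by_cases hta : t ∈ A
        · exact Or.inr ⟨t, hta, h2⟩
        · exact Or.inl ⟨t, ⟨h1, hta⟩, h2⟩
    rw [key, hcells, key2, hT.2]

lemma not_H_of_S {n : ℕ} {T : Finset Tile} (hT : IsTiling n T) {c : ℕ}
    (hS : Tile.S c ∈ T) : Tile.H 0 c ∉ T ∧ Tile.H 1 c ∉ T := by
  constructor <;> intro h
  · have hd := hT.1 _ h _ hS (by simp)
    rw [Finset.disjoint_left] at hd
    exact hd (show ((0:ℕ), c) ∈ (Tile.H 0 c).cells by simp [Tile.cells])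
      (by simp [Tile.cells])
  · have hd := hT.1 _ h _ hS (by simp)
    rw [Finset.disjoint_left] at hd
    exact hd (show ((1:ℕ), c) ∈ (Tile.H 1 c).cells by simp [Tile.cells])
      (by simp [Tile.cells])

lemma not_S_of_H {n : ℕ} {T : Finset Tile} (hT : IsTiling n T) {c : ℕ}
    (hH : Tile.H 0 c ∈ T) : Tile.S c ∉ T :=
  fun h => (not_H_of_S hT h).1 hH

def swapAt (c : ℕ) (T : Finset Tile) : Finset Tile :=
  if Tile.S c ∈ T then (T \ {Tile.S c}) ∪ {Tile.H 0 c, Tile.H 1 c}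
  else (T \ {Tile.H 0 c, Tile.H 1 c}) ∪ {Tile.S c}

def specialSet (n : ℕ) (T : Finset Tile) : Finset ℕ :=
  (range n).filter fun c => Tile.S c ∈ T ∨ (Tile.H 0 c ∈ T ∧ Tile.H 1 c ∈ T)

lemma swapAt_tiling {n : ℕ} {T : Finset Tile} (hT : IsTiling n T) {c : ℕ}
    (hc : Tile.S c ∈ T ∨ (Tile.H 0 c ∈ T ∧ Tile.H 1 c ∈ T)) :
    IsTiling n (swapAt c T) := by
  have hBcells : ({Tile.H 0 c, Tile.H 1 c} : Finset Tile).biUnion Tile.cells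
      = ({Tile.S c} : Finset Tile).biUnion Tile.cells := by
    ext p
    simp only [mem_biUnion, mem_insert, mem_singleton, Tile.cells]
    constructor
    · rintro ⟨t, (rfl | rfl), hp⟩ <;> simp only [mem_insert, mem_singleton] at hp <;>
        exact ⟨Tile.S c, rfl, by simp [Tile.cells]; tauto⟩
    · rintro ⟨t, rfl, hp⟩
      simp only [Tile.cells, mem_insert, mem_singleton] at hp
      rcases hp with h | h | h | h
      · exact ⟨Tile.H 0 c, Or.inl rfl, by simp [Tile.cells, h]⟩
      · exact ⟨Tile.H 0 c, Or.inl rfl, by simp [Tile.cells, h]⟩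
      · exact ⟨Tile.H 1 c, Or.inr rfl, by simp [Tile.cells, h]⟩
      · exact ⟨Tile.H 1 c, Or.inr rfl, by simp [Tile.cells, h]⟩
  have hHdisj : ∀ b ∈ ({Tile.H 0 c, Tile.H 1 c} : Finset Tile),
      ∀ b' ∈ ({Tile.H 0 c, Tile.H 1 c} : Finset Tile), b ≠ b' → Disjoint b.cells b'.cells := by
    intro b hb b' hb' hne
    simp only [mem_insert, mem_singleton] at hb hb'
    rcases hb with rfl | rfl <;> rcases hb' with rfl | rfl <;> first
      | exact absurd rfl hne
      | (rw [Finset.disjoint_left]; intro p hp hp';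
         simp only [Tile.cells, mem_insert, mem_singleton, Prod.ext_iff] at hp hp'; omega)
  rw [swapAt]
  split_ifs with hS
  · exact replace_tiling hT {Tile.S c} {Tile.H 0 c, Tile.H 1 c}
      (by simpa using hS) hHdisj hBcells
  · have hH := hc.resolve_left hS
    exact replace_tiling hT {Tile.H 0 c, Tile.H 1 c} {Tile.S c}
      (by intro t ht; simp only [mem_insert, mem_singleton] at ht;
          rcases ht with rfl | rfl; exacts [hH.1, hH.2])
      (by intro b hb b' hb' hne; simp only [mem_singleton] at hb hb'; subst hb; subst hb';
          exact absurd rfl hne)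
      hBcells.symm

lemma mem_swapAt_of_ne {c : ℕ} {T : Finset Tile} {t : Tile}
    (h1 : t ≠ Tile.S c) (h2 : t ≠ Tile.H 0 c) (h3 : t ≠ Tile.H 1 c) :
    (t ∈ swapAt c T ↔ t ∈ T) := by
  rw [swapAt]
  split_ifs with hS <;>
    simp only [mem_union, mem_sdiff, mem_insert, mem_singleton, h1, h2, h3, or_false,
      and_true, not_or] <;> tauto

lemma sqc_swapAt {n : ℕ} {T : Finset Tile} (hT : IsTiling n T) {c : ℕ}
    (hc : Tile.S c ∈ T ∨ (Tile.H 0 c ∈ T ∧ Tile.H 1 c ∈ T)) :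
    (if Tile.S c ∈ T then sqc T = sqc (swapAt c T) + 1
     else sqc (swapAt c T) = sqc T + 1) := by
  split_ifs with hS
  · have hH := not_H_of_S hT hS
    have : swapAt c T = (T \ {Tile.S c}) ∪ {Tile.H 0 c, Tile.H 1 c} := by
      rw [swapAt, if_pos hS]
    rw [this, sqc, sqc, filter_union]
    have h2 : ({Tile.H 0 c, Tile.H 1 c} : Finset Tile).filter (fun t => t.isSquare) = ∅ := by
      rw [filter_eq_empty_iff]
      intro t ht
      simp only [mem_insert, mem_singleton] at ht
      rcases ht with rfl | rfl <;> simp [Tile.isSquare]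
    rw [h2, union_empty, sdiff_singleton_eq_erase, filter_erase]
    rw [card_erase_of_mem (by simp only [mem_filter]; exact ⟨hS, by simp [Tile.isSquare]⟩)]
    have hpos : 0 < (T.filter fun t => t.isSquare).card :=
      card_pos.2 ⟨Tile.S c, by simp only [mem_filter]; exact ⟨hS, by simp [Tile.isSquare]⟩⟩
    omega
  · have hH := hc.resolve_left hS
    have : swapAt c T = (T \ {Tile.H 0 c, Tile.H 1 c}) ∪ {Tile.S c} := by
      rw [swapAt, if_neg hS]
    rw [this, sqc, sqc, filter_union]
    have h4 : (T \ {Tile.H 0 c, Tile.H 1 c}).filter (fun t => t.isSquare)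
        = T.filter (fun t => t.isSquare) := by
      ext t
      simp only [mem_filter, mem_sdiff, mem_insert, mem_singleton]
      constructor
      · rintro ⟨⟨h1, _⟩, h2⟩; exact ⟨h1, h2⟩
      · rintro ⟨h1, h2⟩
        refine ⟨⟨h1, ?_⟩, h2⟩
        rintro (rfl | rfl) <;> simp [Tile.isSquare] at h2
    have h5 : ({Tile.S c} : Finset Tile).filter (fun t => t.isSquare) = {Tile.S c} := by
      rw [filter_eq_self]; intro t ht; simp only [mem_singleton] at ht; subst ht
      simp [Tile.isSquare]
    rw [h4, h5, card_union_of_disjoint (by simp [disjoint_singleton_right, hS]), card_singleton]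

lemma mem_swapAt_pos {c : ℕ} {T : Finset Tile} (hS : Tile.S c ∈ T) {t : Tile} :
    t ∈ swapAt c T ↔ (t ∈ T ∧ t ≠ Tile.S c) ∨ t = Tile.H 0 c ∨ t = Tile.H 1 c := by
  rw [swapAt, if_pos hS]
  simp only [mem_union, mem_sdiff, mem_singleton, mem_insert]

lemma mem_swapAt_neg {c : ℕ} {T : Finset Tile} (hS : Tile.S c ∉ T) {t : Tile} :
    t ∈ swapAt c T ↔ (t ∈ T ∧ t ≠ Tile.H 0 c ∧ t ≠ Tile.H 1 c) ∨ t = Tile.S c := by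
  rw [swapAt, if_neg hS]
  simp only [mem_union, mem_sdiff, mem_singleton, mem_insert, not_or]

lemma S_notMem_swapAt_pos {c : ℕ} {T : Finset Tile} (hS : Tile.S c ∈ T) :
    Tile.S c ∉ swapAt c T := by
  rw [mem_swapAt_pos hS]
  simp

lemma S_mem_swapAt_neg {c : ℕ} {T : Finset Tile} (hS : Tile.S c ∉ T) :
    Tile.S c ∈ swapAt c T := by
  rw [mem_swapAt_neg hS]
  simp

lemma swapAt_swapAt {n : ℕ} {T : Finset Tile} (hT : IsTiling n T) {c : ℕ}
    (hc : Tile.S c ∈ T ∨ (Tile.H 0 c ∈ T ∧ Tile.H 1 c ∈ T)) :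
    swapAt c (swapAt c T) = T := by
  have d1 : Tile.H 0 c ≠ Tile.S c := by simp
  have d2 : Tile.H 1 c ≠ Tile.S c := by simp
  have d3 : Tile.H 0 c ≠ Tile.H 1 c := by simp
  by_cases hS : Tile.S c ∈ T
  · have hH := not_H_of_S hT hS
    ext t
    rw [mem_swapAt_neg (S_notMem_swapAt_pos hS), mem_swapAt_pos hS]
    constructor
    · rintro (⟨(⟨h1, h2⟩ | rfl | rfl), h3, h4⟩ | rfl)
      · exact h1
      · exact absurd rfl h3
      · exact absurd rfl h4
      · exact hS
    · intro ht
      by_cases he : t = Tile.S c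
      · exact Or.inr he
      · refine Or.inl ⟨Or.inl ⟨ht, he⟩, ?_, ?_⟩
        · rintro rfl; exact hH.1 ht
        · rintro rfl; exact hH.2 ht
  · have hH := hc.resolve_left hS
    have hS' : Tile.S c ∈ swapAt c T := S_mem_swapAt_neg hS
    ext t
    rw [mem_swapAt_pos hS', mem_swapAt_neg hS]
    constructor
    · rintro (⟨(⟨h1, _, _⟩ | rfl), h2⟩ | rfl | rfl)
      · exact h1
      · exact absurd rfl h2
      · exact hH.1
      · exact hH.2
    · intro ht
      by_cases he0 : t = Tile.H 0 c
      · exact Or.inr (Or.inl he0)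
      by_cases he1 : t = Tile.H 1 c
      · exact Or.inr (Or.inr he1)
      · refine Or.inl ⟨Or.inl ⟨ht, he0, he1⟩, ?_⟩
        rintro rfl; exact hS ht

lemma specialSet_swapAt {n : ℕ} {T : Finset Tile} {c : ℕ}
    (hc : c ∈ specialSet n T) :
    specialSet n (swapAt c T) = specialSet n T := by
  rw [specialSet, mem_filter] at hc
  ext c'
  simp only [specialSet, mem_filter]
  by_cases he : c' = c
  · subst he
    refine ⟨fun h => ⟨h.1, hc.2⟩, fun h => ⟨h.1, ?_⟩⟩
    by_cases hS : Tile.S c' ∈ T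
    · refine Or.inr ⟨?_, ?_⟩ <;> rw [mem_swapAt_pos hS] <;> simp
    · exact Or.inl (S_mem_swapAt_neg hS)
  · have e1 : Tile.S c' ∈ swapAt c T ↔ Tile.S c' ∈ T :=
      mem_swapAt_of_ne (by simp [he]) (by simp) (by simp)
    have e2 : Tile.H 0 c' ∈ swapAt c T ↔ Tile.H 0 c' ∈ T :=
      mem_swapAt_of_ne (by simp) (by simp [he]) (by simp)
    have e3 : Tile.H 1 c' ∈ swapAt c T ↔ Tile.H 1 c' ∈ T :=
      mem_swapAt_of_ne (by simp) (by simp) (by simp [he])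
    rw [e1, e2, e3]

lemma conflict {n : ℕ} {T : Finset Tile} (hT : IsTiling n T) {t t' : Tile}
    (ht : t ∈ T) (ht' : t' ∈ T) (hne : t ≠ t') {p : ℕ × ℕ}
    (hp : p ∈ t.cells) (hp' : p ∈ t'.cells) : False :=
  Finset.disjoint_left.1 (hT.1 t ht t' ht' hne) hp hp'

lemma no_special_eq_allV {n : ℕ} {T : Finset Tile} (hT : IsTiling n T)
    (h : ∀ c < n, ¬(Tile.S c ∈ T ∨ (Tile.H 0 c ∈ T ∧ Tile.H 1 c ∈ T))) :
    T = allV n := by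
  have cover : ∀ r c, r < 2 → c < n → ∃ t ∈ T, ((r, c) : ℕ × ℕ) ∈ t.cells := by
    intro r c hr hc
    have : ((r, c) : ℕ × ℕ) ∈ T.biUnion Tile.cells := by
      rw [hT.2]; simp [mem_product, hr, hc]
    simpa using this
  have key : ∀ c, c < n → Tile.V c ∈ T := by
    intro c
    induction c using Nat.strong_induction_on with
    | _ c ih =>
    intro hcn
    obtain ⟨t, htT, htc⟩ := cover 0 c (by norm_num) hcn
    cases t with
    | V c' =>
      have : c' = c := by
        simp only [Tile.cells, mem_insert, mem_singleton, Prod.mk.injEq] at htc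
        omega
      rwa [this] at htT
    | S c' =>
      exfalso
      simp only [Tile.cells, mem_insert, mem_singleton, Prod.mk.injEq] at htc
      have : c' = c ∨ c' + 1 = c := by omega
      rcases this with h1 | hcc
      · rw [h1] at htT
        exact h c hcn (Or.inl htT)
      · have hV : Tile.V c' ∈ T := ih c' (by omega) (by omega)
        exact conflict hT htT hV (by simp) (p := (0, c'))
          (by simp [Tile.cells]) (by simp [Tile.cells])
    | H r' c' =>
      simp only [Tile.cells, mem_insert, mem_singleton, Prod.mk.injEq] at htc
      have hr' : r' = 0 := by omega
      subst hr'
      have : c' = c ∨ c' + 1 = c := by omega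
      rcases this with h1 | hcc
      · -- t = H 0 c, look at cell (1, c)
        exfalso
        obtain ⟨t', ht'T, ht'c⟩ := cover 1 c' (by norm_num) (by omega)
        cases t' with
        | V c'' =>
          have : c'' = c' := by
            simp only [Tile.cells, mem_insert, mem_singleton, Prod.mk.injEq] at ht'c
            omega
          subst this
          exact conflict hT htT ht'T (by simp) (p := (0, c''))
            (by simp [Tile.cells]) (by simp [Tile.cells])
        | S c'' =>
          simp only [Tile.cells, mem_insert, mem_singleton, Prod.mk.injEq] at ht'c
          have : c'' = c' ∨ c'' + 1 = c' := by omega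
          rcases this with h2 | hcc'
          · rw [h2, h1] at ht'T
            exact h c hcn (Or.inl ht'T)
          · have hV : Tile.V c'' ∈ T := ih c'' (by omega) (by omega)
            exact conflict hT ht'T hV (by simp) (p := (1, c''))
              (by simp [Tile.cells]) (by simp [Tile.cells])
        | H r'' c'' =>
          simp only [Tile.cells, mem_insert, mem_singleton, Prod.mk.injEq] at ht'c
          have hr'' : r'' = 1 := by omega
          subst hr''
          have : c'' = c' ∨ c'' + 1 = c' := by omega
          rcases this with h2 | hcc'
          · rw [h2, h1] at ht'T
            rw [h1] at htT
            exact h c hcn (Or.inr ⟨htT, ht'T⟩)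
          · have hV : Tile.V c'' ∈ T := ih c'' (by omega) (by omega)
            exact conflict hT ht'T hV (by simp) (p := (1, c''))
              (by simp [Tile.cells]) (by simp [Tile.cells])
      · exfalso
        have hV : Tile.V c' ∈ T := ih c' (by omega) (by omega)
        exact conflict hT htT hV (by simp) (p := (0, c'))
          (by simp [Tile.cells]) (by simp [Tile.cells])
  ext t
  simp only [allV, mem_image, mem_range]
  constructor
  · intro ht
    have hne : t.cells.Nonempty := by cases t <;> simp [Tile.cells]
    obtain ⟨⟨r, c⟩, hp⟩ := hne
    have hrc : ((r, c) : ℕ × ℕ) ∈ range 2 ×ˢ range n := cells_subset hT ht hp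
    simp only [mem_product, mem_range] at hrc
    have hV : Tile.V c ∈ T := key c hrc.2
    have hpV : ((r, c) : ℕ × ℕ) ∈ (Tile.V c).cells := by
      have hr2 : r < 2 := hrc.1
      rcases (by omega : r = 0 ∨ r = 1) with rfl | rfl <;> simp [Tile.cells]
    by_cases he : t = Tile.V c
    · exact ⟨c, hrc.2, he.symm⟩
    · exact absurd (conflict hT ht hV he hp hpV) not_false
  · rintro ⟨c, hc, rfl⟩
    exact key c hc

lemma specialSet_allV (n : ℕ) : specialSet n (allV n) = ∅ := by
  rw [specialSet, filter_eq_empty_iff]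
  intro c _
  simp [allV]

lemma nonempty_specialSet {n : ℕ} {T : Finset Tile} (hT : IsTiling n T)
    (hne : T ≠ allV n) : (specialSet n T).Nonempty := by
  by_contra h
  rw [not_nonempty_iff_eq_empty, specialSet, filter_eq_empty_iff] at h
  exact hne (no_special_eq_allV hT fun c hc => h (mem_range.2 hc))

lemma erase_sum_zero (n : ℕ) :
    ∑ T ∈ (tilings n).erase (allV n), (-1 : ℤ) ^ (sqc T) = 0 := by
  have hmem : ∀ T ∈ (tilings n).erase (allV n), IsTiling n T ∧ (specialSet n T).Nonempty := by
    intro T hT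
    rw [mem_erase, mem_tilings] at hT
    exact ⟨hT.2, nonempty_specialSet hT.2 hT.1⟩
  refine Finset.sum_involution
    (fun T hT => swapAt ((specialSet n T).min' (hmem T hT).2) T) ?_ ?_ ?_ ?_
  · intro T hT
    set c := (specialSet n T).min' (hmem T hT).2 with hc
    have hcs : c ∈ specialSet n T := min'_mem _ _
    have hsp := (mem_filter.1 hcs).2
    have h2 := sqc_swapAt (hmem T hT).1 hsp
    split_ifs at h2 with hS
    · rw [h2, pow_succ]; ring
    · rw [h2, pow_succ]; ring
  · intro T hT _
    intro heq
    set c := (specialSet n T).min' (hmem T hT).2 with hc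
    have heq' : swapAt c T = T := heq
    have hcs : c ∈ specialSet n T := min'_mem _ _
    have hsp := (mem_filter.1 hcs).2
    have h2 := sqc_swapAt (hmem T hT).1 hsp
    rw [heq'] at h2
    split_ifs at h2 <;> omega
  · intro T hT
    set c := (specialSet n T).min' (hmem T hT).2 with hc
    have hcs : c ∈ specialSet n T := min'_mem _ _
    have hsp := (mem_filter.1 hcs).2
    have htil : IsTiling n (swapAt c T) := swapAt_tiling (hmem T hT).1 hsp
    rw [mem_erase, mem_tilings]
    refine ⟨?_, htil⟩
    intro heq
    have heq' : swapAt c T = allV n := heq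
    have h3 := specialSet_swapAt hcs
    rw [heq', specialSet_allV] at h3
    obtain ⟨x, hx⟩ := (hmem T hT).2
    rw [← h3] at hx
    exact absurd hx (notMem_empty x)
  · intro T hT
    set c := (specialSet n T).min' (hmem T hT).2 with hc
    have hcs : c ∈ specialSet n T := min'_mem _ _
    have hsp := (mem_filter.1 hcs).2
    have e : specialSet n (swapAt c T) = specialSet n T := specialSet_swapAt hcs
    show swapAt ((specialSet n (swapAt c T)).min' _) (swapAt c T) = T
    have ec : ∀ h', (specialSet n (swapAt c T)).min' h' = c := by
      intro h'
      apply le_antisymm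
      · exact min'_le _ _ (by rw [e]; exact hcs)
      · have hm : (specialSet n (swapAt c T)).min' h' ∈ specialSet n T := by
          rw [← e]; exact min'_mem _ h'
        exact min'_le _ _ hm
    rw [ec _]
    exact swapAt_swapAt (hmem T hT).1 hsp


theorem tiling_alternating_sum (n : ℕ) :
    ∑ i ∈ Finset.range (n + 1), (-1 : ℤ) ^ i * (f i n : ℤ) = 1 := by
  have step1 : ∀ i ∈ range (n + 1), (-1 : ℤ) ^ i * (f i n : ℤ)
      = ∑ T ∈ (tilings n).filter (fun T => sqc T = i), (-1 : ℤ) ^ (sqc T) := by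
    intro i _
    rw [f_eq]
    rw [Finset.sum_congr rfl (fun T hT => by rw [(mem_filter.1 hT).2])]
    rw [Finset.sum_const, nsmul_eq_mul, mul_comm]
  rw [Finset.sum_congr rfl step1]
  rw [Finset.sum_fiberwise_of_maps_to
    (fun T hT => mem_range.2 (Nat.lt_succ_of_le (sqc_le (mem_tilings.1 hT)))) _]
  have hallV : allV n ∈ tilings n := mem_tilings.2 (allV_tiling n)
  rw [← Finset.add_sum_erase _ _ hallV, sqc_allV, pow_zero, erase_sum_zero, add_zero]
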